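/- Let Δ be a d-dimensional simplicial complex with a gradient vector field V, let (σ_0^{(k)}, τ_0^{(k−1)}) be a cancellable critical pair for some k ∈ {1,…,d}, and let W be the gradient vector field obtained by cancelling (σ_0, τ_0) from V. Then the Morse coboundary operator δ_{k+1}^W is the restriction of δ_{k+1}^V to the subgroup C_k^W(Δ) of C_k^V(Δ) (note that Crit_k^W(Δ) = Crit_k^V(Δ) \ {σ_0} and Crit_{k+1}^W(Δ) = Crit_{k+1}^V(Δ)). -/
import Mathlib


open scoped Classical

/-- A finite abstract simplicial complex on a linearly ordered vertex type:
a finite nonempty collection of finite subsets closed under taking subsets. -/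
structure SComplex (V : Type*) [LinearOrder V] where
  faces : Finset (Finset V)
  nonempty' : faces.Nonempty
  downClosed : ∀ σ ∈ faces, ∀ τ ⊆ σ, τ ∈ faces

variable {V : Type*} [LinearOrder V]

/-- `Vf` is a discrete vector field on `Δ`: a collection of pairs `(α, β)` of simplices
with `α ⊊ β`, `dim β = dim α + 1`, such that each simplex is in at most one pair. -/
def IsDVF (Δ : SComplex V) (Vf : Finset (Finset V × Finset V)) : Prop :=
  (∀ p ∈ Vf, p.1 ∈ Δ.faces ∧ p.2 ∈ Δ.faces ∧ p.1 ⊂ p.2 ∧ p.2.card = p.1.card + 1) ∧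
    ∀ p ∈ Vf, ∀ q ∈ Vf, p ≠ q → p.1 ≠ q.1 ∧ p.1 ≠ q.2 ∧ p.2 ≠ q.1 ∧ p.2 ≠ q.2

/-- The incidence number `⟨σ, τ⟩`: it is `(-1)^i` if `τ = σ \ {x_i}` where
`x_0 < x_1 < …` are the vertices of `σ`, and `0` otherwise. -/
noncomputable def incidence (σ τ : Finset V) : ℤ :=
  if τ ⊆ σ ∧ (σ \ τ).card = 1 then
    (-1) ^ (σ.filter fun y => ∃ x ∈ σ \ τ, y < x).card
  else 0

/-- A `Vf`-trajectory `β₀, α₁, β₁, …, α_r, β_r` from the `q`-simplex `s` to the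
`q`-simplex `t`.  Here the field `α i` denotes `α_{i+1}` and `β i` denotes `β_i`
of the usual description. -/
structure Traj (Δ : SComplex V) (Vf : Finset (Finset V × Finset V)) (q : ℕ)
    (s t : Finset V) where
  r : ℕ
  β : Fin (r + 1) → Finset V
  α : Fin r → Finset V
  βmem : ∀ i, β i ∈ Δ.faces
  αmem : ∀ i, α i ∈ Δ.faces
  βcard : ∀ i, (β i).card = q + 1
  αcard : ∀ i, (α i).card = q
  first : β 0 = s
  last : β (Fin.last r) = t
  sub : ∀ i : Fin r, α i ⊂ β i.castSucc
  vpair : ∀ i : Fin r, (α i, β i.succ) ∈ Vf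
  αne : ∀ i : Fin r, ∀ h : (i : ℕ) + 1 < r, α ⟨(i : ℕ) + 1, h⟩ ≠ α i
  βne : ∀ i : Fin r, β i.succ ≠ β i.castSucc

/-- A `Vf`-trajectory `β₀, α₁, β₁, …, α_r, β_r, α_{r+1}` from the `q`-simplex `s`
to the `(q-1)`-simplex `t`.  Here `α i` denotes `α_{i+1}` and `β i` denotes `β_i`. -/
structure TrajD (Δ : SComplex V) (Vf : Finset (Finset V × Finset V)) (q : ℕ)
    (s t : Finset V) where
  r : ℕ
  β : Fin (r + 1) → Finset V
  α : Fin (r + 1) → Finset V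
  βmem : ∀ i, β i ∈ Δ.faces
  αmem : ∀ i, α i ∈ Δ.faces
  βcard : ∀ i, (β i).card = q + 1
  αcard : ∀ i, (α i).card = q
  first : β 0 = s
  last : α (Fin.last r) = t
  sub : ∀ i : Fin (r + 1), α i ⊂ β i
  vpair : ∀ i : Fin r, (α i.castSucc, β i.succ) ∈ Vf
  αne : ∀ i : Fin r, α i.succ ≠ α i.castSucc
  βne : ∀ i : Fin r, β i.succ ≠ β i.castSucc

/-- A co-`Vf`-trajectory `β₀, τ₁, β₁, …, τ_r, β_r` from the `q`-simplex `s` to the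
`q`-simplex `t`.  Here `γ i` denotes `τ_{i+1}` and `β i` denotes `β_i`. -/
structure CoTraj (Δ : SComplex V) (Vf : Finset (Finset V × Finset V)) (q : ℕ)
    (s t : Finset V) where
  r : ℕ
  β : Fin (r + 1) → Finset V
  γ : Fin r → Finset V
  βmem : ∀ i, β i ∈ Δ.faces
  γmem : ∀ i, γ i ∈ Δ.faces
  βcard : ∀ i, (β i).card = q + 1
  γcard : ∀ i, (γ i).card = q + 2
  first : β 0 = s
  last : β (Fin.last r) = t
  sub : ∀ i : Fin r, β i.castSucc ⊂ γ i
  vpair : ∀ i : Fin r, (β i.succ, γ i) ∈ Vf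
  βne : ∀ i : Fin r, β i.castSucc ≠ β i.succ

/-- A co-`Vf`-trajectory `β₀, τ₁, β₁, …, τ_r, β_r, τ_{r+1}` from the `(q-1)`-simplex `s`
to the `q`-simplex `t`.  Here `γ i` denotes `τ_{i+1}` and `β i` denotes `β_i`. -/
structure CoTrajU (Δ : SComplex V) (Vf : Finset (Finset V × Finset V)) (q : ℕ)
    (s t : Finset V) where
  r : ℕ
  β : Fin (r + 1) → Finset V
  γ : Fin (r + 1) → Finset V
  βmem : ∀ i, β i ∈ Δ.faces
  γmem : ∀ i, γ i ∈ Δ.faces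
  βcard : ∀ i, (β i).card = q
  γcard : ∀ i, (γ i).card = q + 1
  first : β 0 = s
  last : γ (Fin.last r) = t
  sub : ∀ i : Fin (r + 1), β i ⊂ γ i
  vpair : ∀ i : Fin r, (β i.succ, γ i.castSucc) ∈ Vf
  βne : ∀ i : Fin r, β i.castSucc ≠ β i.succ
  γne : ∀ i : Fin r, γ i.succ ≠ γ i.castSucc

/-- The weight `w(P) = ∏ (-⟨β_{i-1}, α_i⟩⟨β_i, α_i⟩)` of a trajectory between
`q`-simplices. -/
noncomputable def wT {Δ : SComplex V} {Vf : Finset (Finset V × Finset V)} {q : ℕ}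
    {s t : Finset V} (P : Traj Δ Vf q s t) : ℤ :=
  ∏ i : Fin P.r, -(incidence (P.β i.castSucc) (P.α i) * incidence (P.β i.succ) (P.α i))

/-- The weight `w(P) = (∏ (-⟨β_{i-1}, α_i⟩⟨β_i, α_i⟩)) ⬝ ⟨β_r, α_{r+1}⟩` of a trajectory
from a `q`-simplex to a `(q-1)`-simplex. -/
noncomputable def wTD {Δ : SComplex V} {Vf : Finset (Finset V × Finset V)} {q : ℕ}
    {s t : Finset V} (P : TrajD Δ Vf q s t) : ℤ :=
  (∏ i : Fin P.r,
      -(incidence (P.β i.castSucc) (P.α i.castSucc) *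
        incidence (P.β i.succ) (P.α i.castSucc))) *
    incidence (P.β (Fin.last P.r)) (P.α (Fin.last P.r))

/-- The weight `w(Q) = ∏ (-⟨τ_i, β_{i-1}⟩⟨τ_i, β_i⟩)` of a co-trajectory between
`q`-simplices. -/
noncomputable def wCT {Δ : SComplex V} {Vf : Finset (Finset V × Finset V)} {q : ℕ}
    {s t : Finset V} (Q : CoTraj Δ Vf q s t) : ℤ :=
  ∏ i : Fin Q.r, -(incidence (Q.γ i) (Q.β i.castSucc) * incidence (Q.γ i) (Q.β i.succ))

/-- The weight `w(Q) = (∏ (-⟨τ_i, β_{i-1}⟩⟨τ_i, β_i⟩)) ⬝ ⟨τ_{r+1}, β_r⟩` of a co-trajectory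
from a `(q-1)`-simplex to a `q`-simplex. -/
noncomputable def wCTU {Δ : SComplex V} {Vf : Finset (Finset V × Finset V)} {q : ℕ}
    {s t : Finset V} (Q : CoTrajU Δ Vf q s t) : ℤ :=
  (∏ i : Fin Q.r,
      -(incidence (Q.γ i.castSucc) (Q.β i.castSucc) *
        incidence (Q.γ i.castSucc) (Q.β i.succ))) *
    incidence (Q.γ (Fin.last Q.r)) (Q.β (Fin.last Q.r))

/-- A gradient vector field: a discrete vector field admitting no nontrivial closed
trajectory. -/
def IsGVF (Δ : SComplex V) (Vf : Finset (Finset V × Finset V)) : Prop :=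
  IsDVF Δ Vf ∧ ¬ ∃ (q : ℕ) (s : Finset V) (P : Traj Δ Vf q s s), 0 < P.r

/-- `σ` is a critical simplex of `Δ` with respect to `Vf`: a nonempty simplex that either
belongs to no pair of `Vf`, or is a `0`-simplex paired with the empty simplex. -/
def IsCrit (Δ : SComplex V) (Vf : Finset (Finset V × Finset V)) (σ : Finset V) : Prop :=
  σ ∈ Δ.faces ∧ σ.Nonempty ∧
    ((∀ p ∈ Vf, σ ≠ p.1 ∧ σ ≠ p.2) ∨ (σ.card = 1 ∧ (∅, σ) ∈ Vf))

/-- The set of critical simplices of cardinality `c` (i.e. of dimension `c - 1`);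
so `Crit_q = critC Δ Vf (q + 1)`. -/
noncomputable def critC (Δ : SComplex V) (Vf : Finset (Finset V × Finset V)) (c : ℕ) :
    Finset (Finset V) :=
  Δ.faces.filter fun σ => σ.card = c ∧ IsCrit Δ Vf σ

/-- The coefficient of the `(q-1)`-simplex `τ` in `∂_q σ`: the sum of the weights of all
trajectories from `σ` to `τ`. -/
noncomputable def bCoeff (Δ : SComplex V) (Vf : Finset (Finset V × Finset V)) (q : ℕ)
    (σ τ : Finset V) : ℤ :=
  ∑ᶠ P : TrajD Δ Vf q σ τ, wTD P

/-- The `q`-th Morse boundary operator `∂_q`, as an endomorphism of the free abelian group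
on all simplices; it sends a critical `q`-simplex `σ` to
`∑_{τ ∈ Crit_{q-1}} (∑_{P : σ ⇝ τ} w(P)) ⬝ τ` and non-critical generators to `0`. -/
noncomputable def morseBoundary (Δ : SComplex V) (Vf : Finset (Finset V × Finset V))
    (q : ℕ) : (Finset V →₀ ℤ) →ₗ[ℤ] (Finset V →₀ ℤ) :=
  Finsupp.lsum ℤ fun σ => LinearMap.toSpanSingleton ℤ (Finset V →₀ ℤ)
    (if σ ∈ critC Δ Vf (q + 1) then
      ∑ τ ∈ critC Δ Vf q, bCoeff Δ Vf q σ τ • Finsupp.single τ (1 : ℤ)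
    else 0)

/-- The coefficient of the `q`-simplex `τ` in `δ_q σ`: the sum of the weights of all
co-trajectories from `σ` to `τ`. -/
noncomputable def cbCoeff (Δ : SComplex V) (Vf : Finset (Finset V × Finset V)) (q : ℕ)
    (σ τ : Finset V) : ℤ :=
  ∑ᶠ Q : CoTrajU Δ Vf q σ τ, wCTU Q

/-- The `q`-th Morse coboundary operator `δ_q`, as an endomorphism of the free abelian
group on all simplices; it sends a critical `(q-1)`-simplex `σ` to
`∑_{τ ∈ Crit_q} (∑_{Q : σ ⇝ τ} w(Q)) ⬝ τ` and non-critical generators to `0`. -/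
noncomputable def morseCoboundary (Δ : SComplex V) (Vf : Finset (Finset V × Finset V))
    (q : ℕ) : (Finset V →₀ ℤ) →ₗ[ℤ] (Finset V →₀ ℤ) :=
  Finsupp.lsum ℤ fun σ => LinearMap.toSpanSingleton ℤ (Finset V →₀ ℤ)
    (if σ ∈ critC Δ Vf q then
      ∑ τ ∈ critC Δ Vf (q + 1), cbCoeff Δ Vf q σ τ • Finsupp.single τ (1 : ℤ)
    else 0)

/-- The vector field `W = (V \ {(α_i, β_i) : 1 ≤ i ≤ r}) ∪ {(α_{i+1}, β_i) : 0 ≤ i ≤ r}`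
obtained by cancelling a pair of critical simplices along the trajectory `P0`. -/
noncomputable def cancelPair {Δ : SComplex V} {Vf : Finset (Finset V × Finset V)} {k : ℕ}
    {σ0 τ0 : Finset V} (P0 : TrajD Δ Vf k σ0 τ0) : Finset (Finset V × Finset V) :=
  (Vf \ Finset.image (fun i : Fin P0.r => (P0.α i.castSucc, P0.β i.succ)) Finset.univ) ∪
    Finset.image (fun i : Fin (P0.r + 1) => (P0.α i, P0.β i)) Finset.univ

/-- The set of simplices appearing in a trajectory. -/
noncomputable def TrajD.simps {Δ : SComplex V} {Vf : Finset (Finset V × Finset V)} {q : ℕ}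
    {s t : Finset V} (P : TrajD Δ Vf q s t) : Finset (Finset V) :=
  Finset.image P.β Finset.univ ∪ Finset.image P.α Finset.univ

/-- The set of simplices appearing in a trajectory. -/
noncomputable def Traj.simps {Δ : SComplex V} {Vf : Finset (Finset V × Finset V)} {q : ℕ}
    {s t : Finset V} (P : Traj Δ Vf q s t) : Finset (Finset V) :=
  Finset.image P.β Finset.univ ∪ Finset.image P.α Finset.univ

/-- The underlying sequence `β₀, α₁, β₁, …, α_r, β_r, α_{r+1}` of a trajectory. -/
noncomputable def TrajD.seq {Δ : SComplex V} {Vf : Finset (Finset V × Finset V)} {q : ℕ}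
    {s t : Finset V} (P : TrajD Δ Vf q s t) : List (Finset V) :=
  (List.ofFn fun i : Fin (P.r + 1) => [P.β i, P.α i]).flatten

/-- The underlying sequence `β₀, α₁, β₁, …, α_r, β_r` of a trajectory. -/
noncomputable def Traj.seq {Δ : SComplex V} {Vf : Finset (Finset V × Finset V)} {q : ℕ}
    {s t : Finset V} (P : Traj Δ Vf q s t) : List (Finset V) :=
  ((List.ofFn fun i : Fin P.r => [P.β i.castSucc, P.α i]).flatten) ++ [P.β (Fin.last P.r)]

/-- The underlying sequence `β₀, τ₁, β₁, …, β_r, τ_{r+1}` of a co-trajectory. -/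
noncomputable def CoTrajU.seq {Δ : SComplex V} {Vf : Finset (Finset V × Finset V)} {q : ℕ}
    {s t : Finset V} (Q : CoTrajU Δ Vf q s t) : List (Finset V) :=
  (List.ofFn fun i : Fin (Q.r + 1) => [Q.β i, Q.γ i]).flatten

section Aux

variable {Δ : SComplex V} {Vf : Finset (Finset V × Finset V)} {k : ℕ}
  {σ0 τ0 : Finset V}

lemma mem_cancelPair_iff (P0 : TrajD Δ Vf k σ0 τ0) {p : Finset V × Finset V} :
    p ∈ cancelPair P0 ↔
      (p ∈ Vf ∧ ∀ i : Fin P0.r, p ≠ (P0.α i.castSucc, P0.β i.succ)) ∨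
        ∃ i : Fin (P0.r + 1), p = (P0.α i, P0.β i) := by
  unfold cancelPair
  simp only [Finset.mem_union, Finset.mem_sdiff, Finset.mem_image, Finset.mem_univ,
    true_and]
  constructor
  · rintro (⟨h1, h2⟩ | ⟨i, hi⟩)
    · exact Or.inl ⟨h1, fun i hi => h2 ⟨i, hi.symm⟩⟩
    · exact Or.inr ⟨i, hi.symm⟩
  · rintro (⟨h1, h2⟩ | ⟨i, hi⟩)
    · exact Or.inl ⟨h1, fun ⟨i, hi⟩ => h2 i hi.symm⟩
    · exact Or.inr ⟨i, hi.symm⟩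

lemma mem_cancelPair_of_card (P0 : TrajD Δ Vf k σ0 τ0) {p : Finset V × Finset V}
    (h2 : p.2.card ≠ k + 1) : p ∈ cancelPair P0 ↔ p ∈ Vf := by
  rw [mem_cancelPair_iff]
  constructor
  · rintro (⟨h1, _⟩ | ⟨i, hi⟩)
    · exact h1
    · exact absurd (by rw [hi]; exact P0.βcard i) h2
  · intro hp
    refine Or.inl ⟨hp, fun i hi => h2 ?_⟩
    rw [hi]
    exact P0.βcard i.succ

/-- The identity equivalence between co-trajectories of `cancelPair P0` and of `Vf`
one level up. -/
noncomputable def coTrajEquiv (P0 : TrajD Δ Vf k σ0 τ0) (σ τ : Finset V) :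
    CoTrajU Δ (cancelPair P0) (k + 1) σ τ ≃ CoTrajU Δ Vf (k + 1) σ τ where
  toFun Q := ⟨Q.r, Q.β, Q.γ, Q.βmem, Q.γmem, Q.βcard, Q.γcard, Q.first, Q.last, Q.sub,
    fun i => (mem_cancelPair_of_card P0
      (by simp only [Q.γcard i.castSucc]; omega)).mp (Q.vpair i), Q.βne, Q.γne⟩
  invFun Q := ⟨Q.r, Q.β, Q.γ, Q.βmem, Q.γmem, Q.βcard, Q.γcard, Q.first, Q.last, Q.sub,
    fun i => (mem_cancelPair_of_card P0
      (by simp only [Q.γcard i.castSucc]; omega)).mpr (Q.vpair i), Q.βne, Q.γne⟩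
  left_inv Q := rfl
  right_inv Q := rfl

lemma cbCoeff_cancelPair (P0 : TrajD Δ Vf k σ0 τ0) (σ τ : Finset V) :
    cbCoeff Δ (cancelPair P0) (k + 1) σ τ = cbCoeff Δ Vf (k + 1) σ τ := by
  unfold cbCoeff
  exact finsum_eq_of_bijective (coTrajEquiv P0 σ τ) (coTrajEquiv P0 σ τ).bijective
    fun Q => rfl

lemma isCrit_iff_of_two_le {σ : Finset V} (hc : 2 ≤ σ.card)
    (W : Finset (Finset V × Finset V)) :
    IsCrit Δ W σ ↔ σ ∈ Δ.faces ∧ ∀ p ∈ W, σ ≠ p.1 ∧ σ ≠ p.2 := by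
  unfold IsCrit
  constructor
  · rintro ⟨hf, -, h | ⟨h1, -⟩⟩
    · exact ⟨hf, h⟩
    · omega
  · rintro ⟨hf, h⟩
    exact ⟨hf, Finset.card_pos.mp (by omega), Or.inl h⟩

lemma morseCoboundary_single (Δ : SComplex V) (W : Finset (Finset V × Finset V))
    (q : ℕ) (σ : Finset V) :
    morseCoboundary Δ W q (Finsupp.single σ 1) =
      if σ ∈ critC Δ W q then
        ∑ τ ∈ critC Δ W (q + 1), cbCoeff Δ W q σ τ • Finsupp.single τ (1 : ℤ)
      else 0 := by
  unfold morseCoboundary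
  rw [Finsupp.lsum_single]
  simp [LinearMap.toSpanSingleton_apply]

end Aux

/-- δ_{k+1}^W is the restriction of δ_{k+1}^V to C_k^W. -/
theorem statement_11 (Δ : SComplex V) (d k : ℕ)
    (hdim : ∀ σ ∈ Δ.faces, σ.card ≤ d + 1) (hdim' : ∃ σ ∈ Δ.faces, σ.card = d + 1)
    (hk1 : 1 ≤ k) (hkd : k ≤ d)
    (Vf : Finset (Finset V × Finset V)) (hV : IsGVF Δ Vf)
    (σ0 τ0 : Finset V) (hσ0 : σ0 ∈ critC Δ Vf (k + 1)) (hτ0 : τ0 ∈ critC Δ Vf k)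
    (P0 : TrajD Δ Vf k σ0 τ0) (hP0uniq : ∀ Q : TrajD Δ Vf k σ0 τ0, Q = P0) :
    critC Δ (cancelPair P0) (k + 1) = critC Δ Vf (k + 1) \ {σ0} ∧
    critC Δ (cancelPair P0) (k + 2) = critC Δ Vf (k + 2) ∧
    ∀ σ ∈ critC Δ (cancelPair P0) (k + 1),
      morseCoboundary Δ (cancelPair P0) (k + 1) (Finsupp.single σ 1) =
        morseCoboundary Δ Vf (k + 1) (Finsupp.single σ 1) := by
  have hWV1 : critC Δ (cancelPair P0) (k + 1) = critC Δ Vf (k + 1) \ {σ0} := by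
    ext σ
    simp only [critC, Finset.mem_filter, Finset.mem_sdiff, Finset.mem_singleton]
    constructor
    · rintro ⟨hf, hcard, hcrit⟩
      rw [isCrit_iff_of_two_le (by omega) _] at hcrit
      obtain ⟨-, hne⟩ := hcrit
      have hadd : ∀ i : Fin (P0.r + 1), σ ≠ P0.β i := fun i =>
        (hne _ ((mem_cancelPair_iff P0).mpr (Or.inr ⟨i, rfl⟩))).2
      refine ⟨⟨hf, hcard, (isCrit_iff_of_two_le (by omega) Vf).mpr ⟨hf, ?_⟩⟩, ?_⟩
      · intro p hp
        by_cases hrem : ∃ i : Fin P0.r, p = (P0.α i.castSucc, P0.β i.succ)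
        · obtain ⟨i, rfl⟩ := hrem
          refine ⟨?_, hadd i.succ⟩
          intro h; have h2 : σ.card = (P0.α i.castSucc).card := by rw [h]
          have := P0.αcard i.castSucc; omega
        · exact hne p ((mem_cancelPair_iff P0).mpr (Or.inl ⟨hp, fun i hi => hrem ⟨i, hi⟩⟩))
      · have := hadd 0; rwa [P0.first] at this
    · rintro ⟨⟨hf, hcard, hcrit⟩, hne0⟩
      rw [isCrit_iff_of_two_le (by omega) Vf] at hcrit
      obtain ⟨-, hne⟩ := hcrit
      refine ⟨hf, hcard, (isCrit_iff_of_two_le (by omega) _).mpr ⟨hf, ?_⟩⟩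
      intro p hp
      rcases (mem_cancelPair_iff P0).mp hp with ⟨hv, -⟩ | ⟨i, rfl⟩
      · exact hne p hv
      · constructor
        · intro h; have h2 : σ.card = (P0.α i).card := by rw [h]
          have := P0.αcard i; omega
        · cases i using Fin.cases with
          | zero => rw [P0.first]; exact hne0
          | succ j => exact (hne _ (P0.vpair j)).2
  have hWV2 : critC Δ (cancelPair P0) (k + 2) = critC Δ Vf (k + 2) := by
    ext σ
    simp only [critC, Finset.mem_filter]
    constructor
    · rintro ⟨hf, hcard, hcrit⟩
      rw [isCrit_iff_of_two_le (by omega) _] at hcrit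
      obtain ⟨-, hne⟩ := hcrit
      refine ⟨hf, hcard, (isCrit_iff_of_two_le (by omega) Vf).mpr ⟨hf, ?_⟩⟩
      intro p hp
      by_cases hrem : ∃ i : Fin P0.r, p = (P0.α i.castSucc, P0.β i.succ)
      · obtain ⟨i, rfl⟩ := hrem
        constructor
        · intro h; have h2 : σ.card = (P0.α i.castSucc).card := by rw [h]
          have := P0.αcard i.castSucc; omega
        · intro h; have h2 : σ.card = (P0.β i.succ).card := by rw [h]
          have := P0.βcard i.succ; omega
      · exact hne p ((mem_cancelPair_iff P0).mpr (Or.inl ⟨hp, fun i hi => hrem ⟨i, hi⟩⟩))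
    · rintro ⟨hf, hcard, hcrit⟩
      rw [isCrit_iff_of_two_le (by omega) Vf] at hcrit
      obtain ⟨-, hne⟩ := hcrit
      refine ⟨hf, hcard, (isCrit_iff_of_two_le (by omega) _).mpr ⟨hf, ?_⟩⟩
      intro p hp
      rcases (mem_cancelPair_iff P0).mp hp with ⟨hv, -⟩ | ⟨i, rfl⟩
      · exact hne p hv
      · constructor
        · intro h; have h2 : σ.card = (P0.α i).card := by rw [h]
          have := P0.αcard i; omega
        · intro h; have h2 : σ.card = (P0.β i).card := by rw [h]
          have := P0.βcard i; omega
  refine ⟨hWV1, hWV2, fun σ hσ => ?_⟩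
  have hσV : σ ∈ critC Δ Vf (k + 1) := by
    rw [hWV1] at hσ; exact (Finset.mem_sdiff.mp hσ).1
  have hWV2' : critC Δ (cancelPair P0) (k + 1 + 1) = critC Δ Vf (k + 1 + 1) := hWV2
  rw [morseCoboundary_single, morseCoboundary_single, if_pos hσ, if_pos hσV, hWV2']
  exact Finset.sum_congr rfl fun τ _ => by rw [cbCoeff_cancelPair]
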